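/- Let ρ_a and ρ_b be density matrices on ℂ^d, let H = (1/√2)·[[1,1],[1,−1]] be the Hadamard matrix, let V be the swap operator on ℂ^d ⊗ ℂ^d, and let ctrl-V = (|0⟩⟨0| ⊗ I_{d²}) + (|1⟩⟨1| ⊗ V) be the controlled swap with the control qubit in the first register. Define the estimation network E = (H ⊗ I_{d²}) · ctrl-V · (H ⊗ I_{d²}). Then the probability of observing outcome 0 on the control qubit after applying E to the state |0⟩⟨0| ⊗ ρ_a ⊗ ρ_b, namely trace((|0⟩⟨0| ⊗ I_{d²}) · E · (|0⟩⟨0| ⊗ ρ_a ⊗ ρ_b) · Eᴴ), equals (1 + trace(ρ_a·ρ_b))/2. -/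

import Mathlib

open Matrix
open scoped Kronecker ComplexOrder

/-- A density matrix on `ℂ^d`: positive semidefinite with trace `1`. -/
def IsDensityMatrix {d : ℕ} (ρ : Matrix (Fin d) (Fin d) ℂ) : Prop :=
  ρ.PosSemidef ∧ ρ.trace = 1

/-- The swap operator on `ℂ^d ⊗ ℂ^d`. -/
def swapOp (d : ℕ) : Matrix (Fin d × Fin d) (Fin d × Fin d) ℂ :=
  Matrix.of fun p q => if p.1 = q.2 ∧ p.2 = q.1 then 1 else 0

/-- The Hadamard matrix `(1/√2)·[[1,1],[1,−1]]`. -/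
noncomputable def Had : Matrix (Fin 2) (Fin 2) ℂ :=
  ((1 / Real.sqrt 2 : ℝ) : ℂ) • !![1, 1; 1, -1]

/-- `|0⟩⟨0|`. -/
def ket0bra0 : Matrix (Fin 2) (Fin 2) ℂ := !![1, 0; 0, 0]

/-- `|1⟩⟨1|`. -/
def ket1bra1 : Matrix (Fin 2) (Fin 2) ℂ := !![0, 0; 0, 1]

/-- The controlled-swap `|0⟩⟨0| ⊗ I + |1⟩⟨1| ⊗ V`. -/
noncomputable def ctrlV (d : ℕ) : Matrix (Fin 2 × (Fin d × Fin d)) (Fin 2 × (Fin d × Fin d)) ℂ :=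
  ket0bra0 ⊗ₖ (1 : Matrix (Fin d × Fin d) (Fin d × Fin d) ℂ) + ket1bra1 ⊗ₖ swapOp d

/-- The estimation network `E = (H ⊗ I) · ctrl-V · (H ⊗ I)`. -/
noncomputable def estimationNetwork (d : ℕ) :
    Matrix (Fin 2 × (Fin d × Fin d)) (Fin 2 × (Fin d × Fin d)) ℂ :=
  (Had ⊗ₖ (1 : Matrix (Fin d × Fin d) (Fin d × Fin d) ℂ)) * ctrlV d *
    (Had ⊗ₖ (1 : Matrix (Fin d × Fin d) (Fin d × Fin d) ℂ))

/-!
Conjugating the controlled swap by Hadamards gives `E = H|0⟩⟨0|H ⊗ I + H|1⟩⟨1|H ⊗ V`, whose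
`(0, 0)` block is `Π = (I + V)/2`, the projector onto the symmetric subspace. Projecting the
control onto `|0⟩` on both sides leaves only this block, so the probability is
`tr (Π (ρa ⊗ ρb) Π) = tr (Π (ρa ⊗ ρb)) = (tr ρa · tr ρb + tr (V (ρa ⊗ ρb)))/2`,
and `tr (V (A ⊗ B)) = tr (A B)`.
-/

theorem kronecker_submatrix_prodMk {α m n : Type*} [Mul α] (A : Matrix m m α)
    (B : Matrix n n α) (i j : m) :
    (A ⊗ₖ B).submatrix (Prod.mk i) (Prod.mk j) = A i j • B := by
  ext; simp

theorem trace_single_kronecker_one_mul_mul_single_kronecker_mul {α m n : Type*} [Semiring α]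
    [Fintype m] [DecidableEq m] [Fintype n] [DecidableEq n] (i : m)
    (M N : Matrix (m × n) (m × n) α) (σ : Matrix n n α) :
    ((single i i 1 ⊗ₖ (1 : Matrix n n α)) * M * (single i i 1 ⊗ₖ σ) * N).trace =
      (M.submatrix (Prod.mk i) (Prod.mk i) * σ * N.submatrix (Prod.mk i) (Prod.mk i)).trace := by
  simp [Matrix.trace, Matrix.mul_apply, Fintype.sum_prod_type, single_apply, one_apply, ite_and]

theorem ket0bra0_eq_single : ket0bra0 = single 0 0 1 := by
  ext i j; fin_cases i <;> fin_cases j <;> rfl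

theorem Had_zero_apply_mul_apply_zero (i : Fin 2) : Had 0 i * Had i 0 = 1 / 2 := by
  have hsqrt : ((Real.sqrt 2 : ℝ) : ℂ) * (Real.sqrt 2 : ℝ) = 2 := by
    rw [← Complex.ofReal_mul, Real.mul_self_sqrt zero_le_two, Complex.ofReal_ofNat]
  fin_cases i <;> simp [Had, ← mul_inv, hsqrt]

theorem swapOp_conjTranspose (d : ℕ) : (swapOp d)ᴴ = swapOp d := by
  ext ⟨i, j⟩ ⟨k, l⟩
  simp [swapOp, apply_ite (star : ℂ → ℂ), and_comm, eq_comm]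

theorem swapOp_mul_swapOp (d : ℕ) : swapOp d * swapOp d = 1 := by
  ext ⟨i, j⟩ ⟨k, l⟩
  simp [swapOp, Matrix.mul_apply, Fintype.sum_prod_type, one_apply, ite_and, Prod.ext_iff]

theorem trace_swapOp_mul_kronecker {d : ℕ} (A B : Matrix (Fin d) (Fin d) ℂ) :
    (swapOp d * (A ⊗ₖ B)).trace = (A * B).trace := by
  simp [Matrix.trace, Matrix.mul_apply, swapOp, Fintype.sum_prod_type, ite_and]
  exact Finset.sum_comm

noncomputable def symmetricProjector (d : ℕ) : Matrix (Fin d × Fin d) (Fin d × Fin d) ℂ :=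
  (1 / 2 : ℂ) • (1 + swapOp d)

theorem symmetricProjector_conjTranspose (d : ℕ) :
    (symmetricProjector d)ᴴ = symmetricProjector d := by
  simp [symmetricProjector, swapOp_conjTranspose]

theorem symmetricProjector_mul_self (d : ℕ) :
    symmetricProjector d * symmetricProjector d = symmetricProjector d := by
  simp only [symmetricProjector, smul_mul_smul, add_mul, mul_add, swapOp_mul_swapOp,
    Matrix.one_mul, Matrix.mul_one]
  module

theorem trace_symmetricProjector_mul_kronecker {d : ℕ} (A B : Matrix (Fin d) (Fin d) ℂ) :
    (symmetricProjector d * (A ⊗ₖ B)).trace = (A.trace * B.trace + (A * B).trace) / 2 := by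
  rw [symmetricProjector, smul_mul, add_mul, Matrix.one_mul, trace_smul, trace_add,
    trace_kronecker, trace_swapOp_mul_kronecker, smul_eq_mul]
  ring

theorem estimationNetwork_submatrix_zero (d : ℕ) :
    (estimationNetwork d).submatrix (Prod.mk 0) (Prod.mk 0) = symmetricProjector d := by
  rw [estimationNetwork, ctrlV, mul_add, add_mul, ← mul_kronecker_mul, ← mul_kronecker_mul,
    ← mul_kronecker_mul, ← mul_kronecker_mul, submatrix_add, Pi.add_apply, Pi.add_apply,
    kronecker_submatrix_prodMk, kronecker_submatrix_prodMk]
  simp [Matrix.mul_apply, Fin.sum_univ_two, ket0bra0, ket1bra1, Had_zero_apply_mul_apply_zero,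
    symmetricProjector]

theorem estimation_network_prob_zero {d : ℕ} (ρa ρb : Matrix (Fin d) (Fin d) ℂ)
    (ha : IsDensityMatrix ρa) (hb : IsDensityMatrix ρb) :
    ((ket0bra0 ⊗ₖ (1 : Matrix (Fin d × Fin d) (Fin d × Fin d) ℂ)) *
        estimationNetwork d * (ket0bra0 ⊗ₖ (ρa ⊗ₖ ρb)) * (estimationNetwork d)ᴴ).trace =
      (1 + (ρa * ρb).trace) / 2 := by
  rw [ket0bra0_eq_single, trace_single_kronecker_one_mul_mul_single_kronecker_mul,
    ← conjTranspose_submatrix, estimationNetwork_submatrix_zero,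
    symmetricProjector_conjTranspose, trace_mul_comm, ← Matrix.mul_assoc,
    symmetricProjector_mul_self, trace_symmetricProjector_mul_kronecker, ha.2, hb.2, one_mul]
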